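/- Let G be a finite directed graph with nonnegative edge weights containing a directed path P = p₀, …, p_{n-1} of total length 0, let m be an index, and let β ≥ 0. Let D be a set of pairs (a,b) of indices with b < m < a such that for each (a,b) ∈ D there is a walk in G from p_a to p_b of length at most β avoiding all vertices p_k with k < b. Let H be the directed graph on {0, …, n-1} with edges k → k+1 for all k < n-1 and an edge a → b for every (a,b) ∈ D. If v < u are indices and there is a walk in H from u to v all of whose vertices are at least v, then there is a walk in G from p_u to p_v of length at most 2β avoiding all vertices p_k with k < v. -/

import Mathlib

/-- A walk in the directed graph with edge relation `E`: a nonempty list of vertices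
starting at `u`, ending at `v`, with every consecutive pair an edge. -/
def IsWalk {V : Type*} (E : V → V → Prop) (l : List V) (u v : V) : Prop :=
  l ≠ [] ∧ l.head? = some u ∧ l.getLast? = some v ∧ l.Chain' E

/-- The length of a walk: the sum of the weights of its consecutive pairs. -/
def walkLen {V : Type*} (w : V → V → ℝ) (l : List V) : ℝ :=
  ((l.zip l.tail).map fun q => w q.1 q.2).sum

/-!
The last edge of the `H`-walk entering `v` comes from an index `a₁ ≥ v`, so it is not a
successor edge: it is a detour `(a₁, v) ∈ D`. If `u ≤ a₁`, follow `P` from `p u` to `p a₁` and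
take that detour. Otherwise look at the first edge of the `H`-walk that goes down: everything
before it goes up, so it starts at some `a₂ ≥ u`, and being a descent it is a detour
`(a₂, b₂) ∈ D` with `b₂ ≥ v`. Since `b₂ < m < a₁`, the route
`p u ⇝ p a₂ → p b₂ ⇝ p a₁ → p v` (path segments along `P`, arrows detours) uses two detours.
Path segments have length `0` and, `P` being injective, avoid every `p k` with `k < v`.
-/

section

variable {V : Type*}

section Walk

variable {E : V → V → Prop}

@[simp]
lemma walkLen_singleton (w : V → V → ℝ) (a : V) : walkLen w [a] = 0 := by
  simp [walkLen]

@[simp]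
lemma walkLen_cons_cons (w : V → V → ℝ) (a b : V) (l : List V) :
    walkLen w (a :: b :: l) = w a b + walkLen w (b :: l) := by
  simp [walkLen]

lemma walkLen_append_cons (w : V → V → ℝ) (l : List V) (x : V) (t : List V) :
    walkLen w (l ++ x :: t) = walkLen w (l ++ [x]) + walkLen w (x :: t) := by
  induction l with
  | nil => simp
  | cons a l ih =>
    cases l with
    | nil => simp
    | cons b l =>
      simp only [List.cons_append, walkLen_cons_cons] at ih ⊢
      rw [ih]
      ring

lemma isWalk_singleton (E : V → V → Prop) (u : V) : IsWalk E [u] u u :=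
  ⟨by simp, rfl, rfl, List.isChain_singleton u⟩

lemma isWalk_pair {u v : V} (h : E u v) : IsWalk E [u, v] u v :=
  ⟨by simp, rfl, rfl, List.isChain_pair.mpr h⟩

lemma IsWalk.exists_eq_cons {l : List V} {u v : V} (h : IsWalk E l u v) : ∃ t, l = u :: t :=
  List.head?_eq_some_iff.mp h.2.1

lemma IsWalk.exists_eq_append {l : List V} {u v : V} (h : IsWalk E l u v) :
    ∃ t, l = t ++ [v] :=
  List.getLast?_eq_some_iff.mp h.2.2.1

lemma IsWalk.exists_mem_rel_end {l : List V} {u v : V} (h : IsWalk E l u v) (huv : u ≠ v) :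
    ∃ a ∈ l, E a v := by
  obtain ⟨t, rfl⟩ := h.exists_eq_append
  have ht : t ≠ [] := by
    rintro rfl
    exact huv (by simpa using h.2.1.symm)
  exact ⟨t.getLast ht, by simp [List.getLast_mem],
    h.2.2.2.rel_getLast_head_of_append ht (List.cons_ne_nil v [])⟩

/-- Before the first descent the walk only goes up, so that descent starts at or above `u`. -/
lemma IsWalk.exists_first_descent {α : Type*} [LinearOrder α] {R : α → α → Prop} :
    ∀ {l : List α} {u v : α}, IsWalk R l u v → v < u →
      ∃ a b, R a b ∧ b < a ∧ u ≤ a ∧ b ∈ l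
  | [], _, _, h, _ => absurd rfl h.1
  | [a], u, v, h, hvu => by
    obtain ⟨-, hu, hv, -⟩ := h
    simp only [List.head?_cons, List.getLast?_singleton, Option.some.injEq] at hu hv
    subst hu hv
    exact absurd hvu (lt_irrefl a)
  | a :: b :: l, u, v, h, hvu => by
    obtain ⟨-, hu, hv, hchain⟩ := h
    obtain rfl : a = u := by simpa using hu
    obtain ⟨hab, hchain⟩ := List.isChain_cons_cons.mp hchain
    rcases lt_or_ge b a with hba | hab'
    · exact ⟨a, b, hab, hba, le_rfl, by simp⟩
    · obtain ⟨c, d, hcd, hdc, hbc, hd⟩ :=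
        exists_first_descent ⟨List.cons_ne_nil b l, rfl, by simpa using hv, hchain⟩
          (hvu.trans_le hab')
      exact ⟨c, d, hcd, hdc, hab'.trans hbc, List.mem_cons_of_mem a hd⟩

end Walk

def HasWalkWithin (E : V → V → Prop) (w : V → V → ℝ) (S : V → Prop) (c : ℝ) (u v : V) :
    Prop :=
  ∃ l, IsWalk E l u v ∧ walkLen w l ≤ c ∧ ∀ x ∈ l, S x

namespace HasWalkWithin

variable {E : V → V → Prop} {w : V → V → ℝ} {S T : V → Prop} {c d : ℝ} {u v x : V}

lemma refl (hu : S u) : HasWalkWithin E w S 0 u u :=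
  ⟨[u], isWalk_singleton E u, by simp, by simpa using hu⟩

lemma of_rel (h : E u v) (hu : S u) (hv : S v) : HasWalkWithin E w S (w u v) u v :=
  ⟨[u, v], isWalk_pair h, by simp, by simp [hu, hv]⟩

lemma mono (h : HasWalkWithin E w S c u v) (hST : ∀ x, S x → T x) (hcd : c ≤ d) :
    HasWalkWithin E w T d u v :=
  let ⟨l, hl, hlen, hS⟩ := h
  ⟨l, hl, hlen.trans hcd, fun x hx => hST x (hS x hx)⟩

lemma trans (h₁ : HasWalkWithin E w S c u x) (h₂ : HasWalkWithin E w S d x v) :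
    HasWalkWithin E w S (c + d) u v := by
  obtain ⟨l₁, hl₁, hlen₁, hS₁⟩ := h₁
  obtain ⟨l₂, hl₂, hlen₂, hS₂⟩ := h₂
  obtain ⟨s, rfl⟩ := hl₁.exists_eq_append
  obtain ⟨t, rfl⟩ := hl₂.exists_eq_cons
  refine ⟨s ++ x :: t, ⟨by simp, ?_, ?_, ?_⟩, ?_, ?_⟩
  · simpa [List.head?_append] using hl₁.2.1
  · cases t with
    | nil => simpa using hl₂.2.2.1
    | cons y t => simpa [List.getLast?_append] using hl₂.2.2.1
  · have := (hl₁.2.2.2 : (s ++ [x]).IsChain E).append_overlap (l₃ := t) hl₂.2.2.2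
      (List.cons_ne_nil x [])
    exact (by simpa using this : (s ++ x :: t).IsChain E)
  · rw [walkLen_append_cons]
    exact add_le_add hlen₁ hlen₂
  · intro y hy
    rcases List.mem_append.mp hy with hy | hy
    · exact hS₁ y (List.mem_append_left _ hy)
    · exact hS₂ y hy

end HasWalkWithin

lemma hasWalkWithin_zero_of_path {E : V → V → Prop} {w : V → V → ℝ} {S : V → Prop}
    {p : ℕ → V} {i j : ℕ} (hij : i ≤ j)
    (hE : ∀ k, i ≤ k → k < j → E (p k) (p (k + 1)))
    (hw : ∀ k, i ≤ k → k < j → w (p k) (p (k + 1)) = 0)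
    (hS : ∀ k, i ≤ k → k ≤ j → S (p k)) :
    HasWalkWithin E w S 0 (p i) (p j) := by
  induction j, hij using Nat.le_induction with
  | base => exact .refl (hS i le_rfl le_rfl)
  | succ j hij ih =>
    have hstep : HasWalkWithin E w S 0 (p j) (p (j + 1)) := by
      simpa [hw j hij j.lt_succ_self] using
        HasWalkWithin.of_rel (w := w) (hE j hij j.lt_succ_self) (hS j hij j.le_succ)
          (hS (j + 1) (hij.trans j.le_succ) le_rfl)
    simpa using
      (ih (fun k hik hkj => hE k hik (hkj.trans j.lt_succ_self))
        (fun k hik hkj => hw k hik (hkj.trans j.lt_succ_self))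
        (fun k hik hkj => hS k hik (hkj.trans j.le_succ))).trans hstep

end

theorem stmt_11_general {V : Type*} (E : V → V → Prop) (w : V → V → ℝ)
    (n : ℕ) (p : ℕ → V)
    (hinj : ∀ i j, i < n → j < n → p i = p j → i = j)
    (hch : ∀ i, i + 1 < n → E (p i) (p (i + 1)))
    (hlen0 : ∀ i, i + 1 < n → w (p i) (p (i + 1)) = 0)
    (m : ℕ) (β : ℝ) (hβ : 0 ≤ β)
    (D : Set (ℕ × ℕ)) (hD : ∀ q ∈ D, q.2 < m ∧ m < q.1 ∧ q.1 < n)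
    (hDwalk : ∀ q ∈ D, ∃ l, IsWalk E l (p q.1) (p q.2) ∧ walkLen w l ≤ β ∧
      ∀ x ∈ l, ∀ k, k < q.2 → x ≠ p k) :
    let H : ℕ → ℕ → Prop := fun a c => (a + 1 < n ∧ c = a + 1) ∨ (a, c) ∈ D
    ∀ u v : ℕ, v < u → u < n →
      (∃ l, IsWalk H l u v ∧ ∀ x ∈ l, v ≤ x) →
      ∃ l, IsWalk E l (p u) (p v) ∧ walkLen w l ≤ 2 * β ∧
        ∀ x ∈ l, ∀ k, k < v → x ≠ p k := by
  intro H u v hvu hun ⟨l, hl, hlv⟩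
  let S : V → Prop := fun x => ∀ k, k < v → x ≠ p k
  have hseg : ∀ i j, v ≤ i → i ≤ j → j < n → HasWalkWithin E w S 0 (p i) (p j) :=
    fun i j hvi hij hjn => hasWalkWithin_zero_of_path hij
      (fun k _ hkj => hch k (by omega)) (fun k _ hkj => hlen0 k (by omega))
      (fun k hik hkj k' hk' heq => by have := hinj k k' (by omega) (by omega) heq; omega)
  have hdet : ∀ a b, (a, b) ∈ D → v ≤ b → HasWalkWithin E w S β (p a) (p b) :=
    fun a b hab hvb => HasWalkWithin.mono (hDwalk _ hab) (fun x hx k hk => hx k (by omega)) le_rfl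
  obtain ⟨a₁, ha₁l, hHa₁⟩ := hl.exists_mem_rel_end hvu.ne'
  have hD₁ : (a₁, v) ∈ D := hHa₁.resolve_left (by have := hlv a₁ ha₁l; omega)
  obtain ⟨-, hma₁, ha₁n⟩ := hD _ hD₁
  by_cases hua₁ : u ≤ a₁
  · exact ((hseg u a₁ hvu.le hua₁ ha₁n).trans (hdet _ _ hD₁ le_rfl)).mono (fun _ h => h)
      (by linarith)
  · obtain ⟨a₂, b₂, hH₂, hba₂, hua₂, hb₂l⟩ := hl.exists_first_descent hvu
    have hD₂ : (a₂, b₂) ∈ D := hH₂.resolve_left (by omega)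
    obtain ⟨hb₂m, -, ha₂n⟩ := hD _ hD₂
    have hvb₂ := hlv b₂ hb₂l
    exact ((((hseg u a₂ hvu.le hua₂ ha₂n).trans (hdet _ _ hD₂ hvb₂)).trans
      (hseg b₂ a₁ hvb₂ (by omega) ha₁n)).trans (hdet _ _ hD₁ le_rfl)).mono (fun _ h => h)
      (by linarith)

/-- With `P` a zero-length path, detour pairs `D` realized in `G` by walks
of length at most `β` avoiding the prefix before their endpoint, and `H` the index graph
with successor and detour edges: if `v < u` and `H` has a walk from `u` to `v` staying at
indices `≥ v`, then `G` has a walk from `p u` to `p v` of length at most `2β` avoiding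
all vertices `p k` with `k < v`. -/
theorem stmt_11 {V : Type*} [Fintype V] (E : V → V → Prop) (w : V → V → ℝ)
    (hw : ∀ x y, 0 ≤ w x y) (n : ℕ) (hn : 0 < n) (p : ℕ → V)
    (hinj : ∀ i j, i < n → j < n → p i = p j → i = j)
    (hch : ∀ i, i + 1 < n → E (p i) (p (i + 1)))
    (hlen0 : ∀ i, i + 1 < n → w (p i) (p (i + 1)) = 0)
    (m : ℕ) (hm : m < n) (β : ℝ) (hβ : 0 ≤ β)
    (D : Set (ℕ × ℕ)) (hD : ∀ q ∈ D, q.2 < m ∧ m < q.1 ∧ q.1 < n)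
    (hDwalk : ∀ q ∈ D, ∃ l, IsWalk E l (p q.1) (p q.2) ∧ walkLen w l ≤ β ∧
      ∀ x ∈ l, ∀ k, k < q.2 → x ≠ p k) :
    let H : ℕ → ℕ → Prop := fun a c => (a + 1 < n ∧ c = a + 1) ∨ (a, c) ∈ D
    ∀ u v : ℕ, v < u → u < n →
      (∃ l, IsWalk H l u v ∧ ∀ x ∈ l, v ≤ x) →
      ∃ l, IsWalk E l (p u) (p v) ∧ walkLen w l ≤ 2 * β ∧
        ∀ x ∈ l, ∀ k, k < v → x ≠ p k :=
  stmt_11_general E w n p hinj hch hlen0 m β hβ D hD hDwalk
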